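/- arXiv:0910.2142 — 8 statements merged into one kernel-verified Lean document; each statement's English description precedes it below -/
import Mathlib

section
/- Let G be a group, n ≥ 2, and let σ : {(i,j) : 1 ≤ i < j ≤ n} → G be a family of elements such that for all i < j < k one has σ_{ij}·σ_{jk} = σ_{jk}·σ_{ik} and σ_{jk}·σ_{ik} = σ_{ik}·σ_{ij}. Then the following three subgroups of G coincide: the subgroup generated by {σ_{i,i+1} : 1 ≤ i ≤ n−1}, the subgroup generated by {σ_{1,j} : 2 ≤ j ≤ n}, and the subgroup generated by all σ_{ij} with 1 ≤ i < j ≤ n. -/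
/-- Given a family σ_{ij} (1 ≤ i < j ≤ n) in a group satisfying the
triangle relations σ_{ij}σ_{jk} = σ_{jk}σ_{ik} and σ_{jk}σ_{ik} = σ_{ik}σ_{ij},
the subgroup generated by the σ_{i,i+1}, the subgroup generated by the σ_{1,j},
and the subgroup generated by all σ_{ij} coincide. -/
theorem stmt_4 {G : Type*} [Group G] (n : ℕ) (hn : 2 ≤ n) (σ : ℕ → ℕ → G)
    (hrel : ∀ i j k : ℕ, 1 ≤ i → i < j → j < k → k ≤ n →
      σ i j * σ j k = σ j k * σ i k ∧ σ j k * σ i k = σ i k * σ i j) :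
    Subgroup.closure {g : G | ∃ i : ℕ, 1 ≤ i ∧ i ≤ n - 1 ∧ g = σ i (i + 1)} =
      Subgroup.closure {g : G | ∃ j : ℕ, 2 ≤ j ∧ j ≤ n ∧ g = σ 1 j} ∧
    Subgroup.closure {g : G | ∃ j : ℕ, 2 ≤ j ∧ j ≤ n ∧ g = σ 1 j} =
      Subgroup.closure {g : G | ∃ i j : ℕ, 1 ≤ i ∧ i < j ∧ j ≤ n ∧ g = σ i j} := by
  set A := Subgroup.closure {g : G | ∃ i : ℕ, 1 ≤ i ∧ i ≤ n - 1 ∧ g = σ i (i + 1)} with hAdef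
  set B := Subgroup.closure {g : G | ∃ j : ℕ, 2 ≤ j ∧ j ≤ n ∧ g = σ 1 j} with hBdef
  set C := Subgroup.closure {g : G | ∃ i j : ℕ, 1 ≤ i ∧ i < j ∧ j ≤ n ∧ g = σ i j}
    with hCdef
  have hA : ∀ j i : ℕ, 1 ≤ i → i < j → j ≤ n → σ i j ∈ A := by
    intro j
    induction j with
    | zero => intro i hi hij hjn; omega
    | succ m ih =>
      intro i hi hij hjn
      rcases eq_or_lt_of_le (Nat.lt_succ_iff.mp hij) with h | h
      · subst h
        exact Subgroup.subset_closure ⟨i, hi, by omega, rfl⟩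
      · have h1 := (hrel i m (m + 1) hi h (Nat.lt_succ_self m) hjn).1
        have heq : σ i (m + 1) = (σ m (m + 1))⁻¹ * σ i m * σ m (m + 1) := by
          rw [mul_assoc, h1]; group
        rw [heq]
        have hm : σ m (m + 1) ∈ A :=
          Subgroup.subset_closure ⟨m, by omega, by omega, rfl⟩
        exact mul_mem (mul_mem (inv_mem hm) (ih i hi h (by omega))) hm
  have hB : ∀ i : ℕ, 1 ≤ i → i + 1 ≤ n → σ i (i + 1) ∈ B := by
    intro i hi hin
    rcases eq_or_lt_of_le hi with h | h
    · rw [← h]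
      exact Subgroup.subset_closure ⟨2, le_refl 2, by omega, rfl⟩
    · have h2 := (hrel 1 i (i + 1) le_rfl h (Nat.lt_succ_self i) hin).2
      have heq : σ i (i + 1) = σ 1 (i + 1) * σ 1 i * (σ 1 (i + 1))⁻¹ := by
        rw [mul_assoc, ← mul_assoc (σ 1 (i + 1)), ← h2]; group
      rw [heq]
      have h1i : σ 1 i ∈ B := Subgroup.subset_closure ⟨i, by omega, by omega, rfl⟩
      have h1i1 : σ 1 (i + 1) ∈ B :=
        Subgroup.subset_closure ⟨i + 1, by omega, hin, rfl⟩
      exact mul_mem (mul_mem h1i1 h1i) (inv_mem h1i1)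
  have hCA : C ≤ A := by
    rw [hCdef, Subgroup.closure_le]
    rintro g ⟨i, j, hi, hij, hjn, rfl⟩
    exact hA j i hi hij hjn
  have hAB : A ≤ B := by
    rw [hAdef, Subgroup.closure_le]
    rintro g ⟨i, hi, hin, rfl⟩
    exact hB i hi (by omega)
  have hBC : B ≤ C := by
    rw [hBdef, Subgroup.closure_le]
    rintro g ⟨j, hj, hjn, rfl⟩
    exact Subgroup.subset_closure ⟨1, j, le_rfl, by omega, hjn, rfl⟩
  exact ⟨le_antisymm hAB (hBC.trans hCA), le_antisymm hBC (hCA.trans hAB)⟩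
end

section
/- Let G be a group and let σ1, σ2, σ3 ∈ G satisfy the braid relations of the braid group Br₄, and set Δ4 := σ1σ2σ3σ1σ2σ1. Let F₀ be the list (σ2³, σ1σ3σ2σ3⁻¹σ1⁻¹, σ1³, σ3³). Then F₀ is Hurwitz equivalent to its simultaneous conjugate by Δ4, which equals the list (σ2³, σ3σ1σ2σ1⁻¹σ3⁻¹, σ3³, σ1³). -/
/-- An elementary Hurwitz move on a list of elements of a group `G`:
a consecutive pair `(a, b)` is replaced by `(a * b * a⁻¹, a)`. -/
def HurwitzMove {G : Type*} [Group G] (l l' : List G) : Prop :=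
  ∃ (l₁ l₂ : List G) (a b : G),
    l = l₁ ++ a :: b :: l₂ ∧ l' = l₁ ++ (a * b * a⁻¹) :: a :: l₂

/-- Hurwitz equivalence: the equivalence relation on lists of elements of `G`
generated by elementary Hurwitz moves. -/
def HurwitzEquiv {G : Type*} [Group G] : List G → List G → Prop :=
  Relation.EqvGen HurwitzMove

/-- F₀ = (σ2³, σ1σ3σ2σ3⁻¹σ1⁻¹, σ1³, σ3³) is Hurwitz equivalent to its
simultaneous conjugate by Δ4 = σ1σ2σ3σ1σ2σ1, which equals
(σ2³, σ3σ1σ2σ1⁻¹σ3⁻¹, σ3³, σ1³). -/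
theorem stmt_6 {G : Type*} [Group G] (σ1 σ2 σ3 Δ4 : G)
    (h12 : σ1 * σ2 * σ1 = σ2 * σ1 * σ2)
    (h23 : σ2 * σ3 * σ2 = σ3 * σ2 * σ3)
    (h13 : σ1 * σ3 = σ3 * σ1)
    (hΔ : Δ4 = σ1 * σ2 * σ3 * σ1 * σ2 * σ1) :
    HurwitzEquiv
      [σ2 ^ 3, σ1 * σ3 * σ2 * σ3⁻¹ * σ1⁻¹, σ1 ^ 3, σ3 ^ 3]
      (List.map (fun β => Δ4 * β * Δ4⁻¹)
        [σ2 ^ 3, σ1 * σ3 * σ2 * σ3⁻¹ * σ1⁻¹, σ1 ^ 3, σ3 ^ 3]) ∧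
    List.map (fun β => Δ4 * β * Δ4⁻¹)
        [σ2 ^ 3, σ1 * σ3 * σ2 * σ3⁻¹ * σ1⁻¹, σ1 ^ 3, σ3 ^ 3] =
      [σ2 ^ 3, σ3 * σ1 * σ2 * σ1⁻¹ * σ3⁻¹, σ3 ^ 3, σ1 ^ 3] := by
  have a12 : ∀ x : G, σ1*(σ2*(σ1*x)) = σ2*(σ1*(σ2*x)) := fun x => by
    simp only [← mul_assoc]; rw [h12]
  have a23 : ∀ x : G, σ2*(σ3*(σ2*x)) = σ3*(σ2*(σ3*x)) := fun x => by
    simp only [← mul_assoc]; rw [h23]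
  have a13 : ∀ x : G, σ1*(σ3*x) = σ3*(σ1*x) := fun x => by
    simp only [← mul_assoc]; rw [h13]
  have b12 : σ1*(σ2*σ1) = σ2*(σ1*σ2) := by simp only [← mul_assoc]; rw [h12]
  -- conjugation identities
  have k1 : Δ4 * σ1 = σ3 * Δ4 := by
    subst hΔ; simp only [mul_assoc]; conv_rhs => rw [← a13, ← a23, ← a12]
  have k2 : Δ4 * σ2 = σ2 * Δ4 := by
    subst hΔ; simp only [mul_assoc]
    conv_lhs => rw [← b12, ← a13]
    conv_rhs => rw [← a12]
  have k3 : Δ4 * σ3 = σ1 * Δ4 := by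
    subst hΔ; simp only [mul_assoc]
    conv_lhs => rw [h13, ← a13, ← a23]
    conv_rhs => rw [← a13, a12]
  have e1 : MulAut.conj Δ4 σ1 = σ3 := by
    simp only [MulAut.conj_apply]; rw [k1, mul_inv_cancel_right]
  have e2 : MulAut.conj Δ4 σ2 = σ2 := by
    simp only [MulAut.conj_apply]; rw [k2, mul_inv_cancel_right]
  have e3 : MulAut.conj Δ4 σ3 = σ1 := by
    simp only [MulAut.conj_apply]; rw [k3, mul_inv_cancel_right]
  have hmap : List.map (fun β => Δ4 * β * Δ4⁻¹)
        [σ2 ^ 3, σ1 * σ3 * σ2 * σ3⁻¹ * σ1⁻¹, σ1 ^ 3, σ3 ^ 3] =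
      [σ2 ^ 3, σ3 * σ1 * σ2 * σ1⁻¹ * σ3⁻¹, σ3 ^ 3, σ1 ^ 3] := by
    have : (fun β => Δ4 * β * Δ4⁻¹) = ⇑(MulAut.conj Δ4) := by
      funext β; simp [MulAut.conj_apply]
    rw [this]
    simp [map_mul, map_inv, map_pow, e1, e2, e3]
  refine ⟨?_, hmap⟩
  rw [hmap]
  -- inverses of commuting elements commute
  have h13' : σ3⁻¹ * σ1⁻¹ = σ1⁻¹ * σ3⁻¹ := by
    rw [← mul_inv_rev, ← mul_inv_rev, h13]
  have hb : σ1 * σ3 * σ2 * σ3⁻¹ * σ1⁻¹ = σ3 * σ1 * σ2 * σ1⁻¹ * σ3⁻¹ := by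
    rw [h13, mul_assoc (σ3 * σ1 * σ2), h13', ← mul_assoc]
  have hcubes : σ1 ^ 3 * σ3 ^ 3 * (σ1 ^ 3)⁻¹ = σ3 ^ 3 := by
    have : Commute σ1 σ3 := h13
    rw [(this.pow_pow 3 3).eq, mul_inv_cancel_right]
  apply Relation.EqvGen.rel
  refine ⟨[σ2 ^ 3, σ1 * σ3 * σ2 * σ3⁻¹ * σ1⁻¹], [], σ1 ^ 3, σ3 ^ 3, rfl, ?_⟩
  simp [hcubes, hb]
end

section
/- Let G be a group and let σ1, σ2, σ3 ∈ G satisfy the braid relations of the braid group Br₄, and set Δ4 := σ1σ2σ3σ1σ2σ1. Let G₀ be the list (σ1⁻¹σ2σ1, σ2⁻¹σ3σ2, σ1⁻¹σ2σ1, σ2⁻¹σ3σ2). Then the simultaneous conjugate of G₀ by σ1² is Hurwitz equivalent to the simultaneous conjugate of G₀ by Δ4, which equals the list (σ3⁻¹σ2σ3, σ2⁻¹σ1σ2, σ3⁻¹σ2σ3, σ2⁻¹σ1σ2). -/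
/-- The simultaneous conjugate of
G₀ = (σ1⁻¹σ2σ1, σ2⁻¹σ3σ2, σ1⁻¹σ2σ1, σ2⁻¹σ3σ2) by σ1² is Hurwitz equivalent to its
simultaneous conjugate by Δ4 = σ1σ2σ3σ1σ2σ1, which equals
(σ3⁻¹σ2σ3, σ2⁻¹σ1σ2, σ3⁻¹σ2σ3, σ2⁻¹σ1σ2). -/
theorem stmt_8 {G : Type*} [Group G] (σ1 σ2 σ3 Δ4 : G)
    (h12 : σ1 * σ2 * σ1 = σ2 * σ1 * σ2)
    (h23 : σ2 * σ3 * σ2 = σ3 * σ2 * σ3)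
    (h13 : σ1 * σ3 = σ3 * σ1)
    (hΔ : Δ4 = σ1 * σ2 * σ3 * σ1 * σ2 * σ1) :
    HurwitzEquiv
      (List.map (fun β => σ1 ^ 2 * β * (σ1 ^ 2)⁻¹)
        [σ1⁻¹ * σ2 * σ1, σ2⁻¹ * σ3 * σ2, σ1⁻¹ * σ2 * σ1, σ2⁻¹ * σ3 * σ2])
      (List.map (fun β => Δ4 * β * Δ4⁻¹)
        [σ1⁻¹ * σ2 * σ1, σ2⁻¹ * σ3 * σ2, σ1⁻¹ * σ2 * σ1, σ2⁻¹ * σ3 * σ2]) ∧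
    List.map (fun β => Δ4 * β * Δ4⁻¹)
        [σ1⁻¹ * σ2 * σ1, σ2⁻¹ * σ3 * σ2, σ1⁻¹ * σ2 * σ1, σ2⁻¹ * σ3 * σ2] =
      [σ3⁻¹ * σ2 * σ3, σ2⁻¹ * σ1 * σ2, σ3⁻¹ * σ2 * σ3, σ2⁻¹ * σ1 * σ2] := by
  subst hΔ
  -- abbreviations
  set Δ : G := σ1 * σ2 * σ3 * σ1 * σ2 * σ1 with hΔdef
  -- Δ conjugation sends σ1 ↦ σ3, σ2 ↦ σ2, σ3 ↦ σ1
  have A1 : σ3 * Δ = Δ * σ1 := by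
    rw [hΔdef]
    calc σ3 * (σ1 * σ2 * σ3 * σ1 * σ2 * σ1)
        = (σ3 * σ1) * σ2 * σ3 * σ1 * σ2 * σ1 := by group
      _ = (σ1 * σ3) * σ2 * σ3 * σ1 * σ2 * σ1 := by rw [← h13]
      _ = σ1 * (σ3 * σ2 * σ3) * σ1 * σ2 * σ1 := by group
      _ = σ1 * (σ2 * σ3 * σ2) * σ1 * σ2 * σ1 := by rw [h23]
      _ = σ1 * σ2 * σ3 * (σ2 * σ1 * σ2) * σ1 := by group
      _ = σ1 * σ2 * σ3 * (σ1 * σ2 * σ1) * σ1 := by rw [h12]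
      _ = (σ1 * σ2 * σ3 * σ1 * σ2 * σ1) * σ1 := by group
  have A2 : σ2 * Δ = Δ * σ2 := by
    rw [hΔdef]
    calc σ2 * (σ1 * σ2 * σ3 * σ1 * σ2 * σ1)
        = (σ2 * σ1 * σ2) * σ3 * σ1 * σ2 * σ1 := by group
      _ = (σ1 * σ2 * σ1) * σ3 * σ1 * σ2 * σ1 := by rw [← h12]
      _ = σ1 * σ2 * (σ1 * σ3) * σ1 * σ2 * σ1 := by group
      _ = σ1 * σ2 * (σ3 * σ1) * σ1 * σ2 * σ1 := by rw [h13]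
      _ = σ1 * σ2 * σ3 * σ1 * (σ1 * σ2 * σ1) := by group
      _ = σ1 * σ2 * σ3 * σ1 * (σ2 * σ1 * σ2) := by rw [h12]
      _ = (σ1 * σ2 * σ3 * σ1 * σ2 * σ1) * σ2 := by group
  have A3 : σ1 * Δ = Δ * σ3 := by
    rw [hΔdef]
    calc σ1 * (σ1 * σ2 * σ3 * σ1 * σ2 * σ1)
        = σ1 * σ1 * σ2 * (σ3 * σ1) * σ2 * σ1 := by group
      _ = σ1 * σ1 * σ2 * (σ1 * σ3) * σ2 * σ1 := by rw [← h13]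
      _ = σ1 * (σ1 * σ2 * σ1) * σ3 * σ2 * σ1 := by group
      _ = σ1 * (σ2 * σ1 * σ2) * σ3 * σ2 * σ1 := by rw [h12]
      _ = σ1 * σ2 * σ1 * (σ2 * σ3 * σ2) * σ1 := by group
      _ = σ1 * σ2 * σ1 * (σ3 * σ2 * σ3) * σ1 := by rw [h23]
      _ = σ1 * σ2 * (σ1 * σ3) * σ2 * σ3 * σ1 := by group
      _ = σ1 * σ2 * (σ3 * σ1) * σ2 * σ3 * σ1 := by rw [h13]
      _ = σ1 * σ2 * σ3 * σ1 * σ2 * (σ3 * σ1) := by group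
      _ = σ1 * σ2 * σ3 * σ1 * σ2 * (σ1 * σ3) := by rw [← h13]
      _ = (σ1 * σ2 * σ3 * σ1 * σ2 * σ1) * σ3 := by group
  have e1 : Δ * σ1 * Δ⁻¹ = σ3 := by rw [← A1]; group
  have e2 : Δ * σ2 * Δ⁻¹ = σ2 := by rw [← A2]; group
  have e3 : Δ * σ3 * Δ⁻¹ = σ1 := by rw [← A3]; group
  have CA : Δ * (σ1⁻¹ * σ2 * σ1) * Δ⁻¹ = σ3⁻¹ * σ2 * σ3 := by
    calc Δ * (σ1⁻¹ * σ2 * σ1) * Δ⁻¹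
        = (Δ * σ1 * Δ⁻¹)⁻¹ * (Δ * σ2 * Δ⁻¹) * (Δ * σ1 * Δ⁻¹) := by group
      _ = σ3⁻¹ * σ2 * σ3 := by rw [e1, e2]
  have CB : Δ * (σ2⁻¹ * σ3 * σ2) * Δ⁻¹ = σ2⁻¹ * σ1 * σ2 := by
    calc Δ * (σ2⁻¹ * σ3 * σ2) * Δ⁻¹
        = (Δ * σ2 * Δ⁻¹)⁻¹ * (Δ * σ3 * Δ⁻¹) * (Δ * σ2 * Δ⁻¹) := by group
      _ = σ2⁻¹ * σ1 * σ2 := by rw [e2, e3]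
  -- abbreviations for the σ1²-conjugates
  set x : G := σ1 ^ 2 * (σ1⁻¹ * σ2 * σ1) * (σ1 ^ 2)⁻¹ with hx
  set y : G := σ1 ^ 2 * (σ2⁻¹ * σ3 * σ2) * (σ1 ^ 2)⁻¹ with hy
  have K2 : x = σ2⁻¹ * σ1 * σ2 := by
    rw [hx]
    calc σ1 ^ 2 * (σ1⁻¹ * σ2 * σ1) * (σ1 ^ 2)⁻¹
        = σ2⁻¹ * (σ2 * σ1 * σ2) * σ1⁻¹ := by group
      _ = σ2⁻¹ * (σ1 * σ2 * σ1) * σ1⁻¹ := by rw [← h12]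
      _ = σ2⁻¹ * σ1 * σ2 := by group
  have K1 : x * y * x⁻¹ = σ3⁻¹ * σ2 * σ3 := by
    rw [hx, hy]
    calc σ1 ^ 2 * (σ1⁻¹ * σ2 * σ1) * (σ1 ^ 2)⁻¹ * (σ1 ^ 2 * (σ2⁻¹ * σ3 * σ2) * (σ1 ^ 2)⁻¹) *
          (σ1 ^ 2 * (σ1⁻¹ * σ2 * σ1) * (σ1 ^ 2)⁻¹)⁻¹
        = (σ1 * σ2 * σ1) * (σ2⁻¹ * σ3 * σ2) * (σ1 * σ2 * σ1)⁻¹ := by group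
      _ = (σ2 * σ1 * σ2) * (σ2⁻¹ * σ3 * σ2) * (σ2 * σ1 * σ2)⁻¹ := by rw [h12]
      _ = σ2 * ((σ1 * σ3) * σ1⁻¹) * σ2⁻¹ := by group
      _ = σ2 * ((σ3 * σ1) * σ1⁻¹) * σ2⁻¹ := by rw [h13]
      _ = σ3⁻¹ * (σ3 * σ2 * σ3) * σ3⁻¹ * (σ3 * σ2⁻¹) * σ2 * σ3 * (σ3⁻¹ * σ2⁻¹) := by group
      _ = σ3⁻¹ * (σ2 * σ3 * σ2) * σ3⁻¹ * (σ3 * σ2⁻¹) * σ2 * σ3 * (σ3⁻¹ * σ2⁻¹) := by rw [h23]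
      _ = σ3⁻¹ * σ2 * σ3 := by group
  refine ⟨?_, ?_⟩
  · simp only [List.map_cons, List.map_nil]
    rw [CA, CB, ← K1, ← K2]
    exact Relation.EqvGen.trans _ _ _
      (Relation.EqvGen.rel _ _ ⟨[x, y], [], x, y, rfl, rfl⟩)
      (Relation.EqvGen.rel _ _ ⟨[], [x * y * x⁻¹, x], x, y, rfl, rfl⟩)
  · simp only [List.map_cons, List.map_nil]
    rw [CA, CB]
end

section
/- Let G be a group and let σ1, σ2, σ3 ∈ G satisfy the braid relations of the braid group Br₄. Let G₀ be the list (σ1⁻¹σ2σ1, σ2⁻¹σ3σ2, σ1⁻¹σ2σ1, σ2⁻¹σ3σ2). Then the simultaneous conjugate of G₀ by σ1² can be obtained from G₀ by a finite sequence of elementary Hurwitz moves (and their inverses) together with creations and deletions of a pair of consecutive entries of the form (β, β⁻¹) with β = σ1² or β = σ1⁻². -/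
/-- Creation of a pair `(β, β⁻¹)` with `β ∈ S`: inserting two consecutive entries
`β, β⁻¹` at some position of the list. -/
def PairCreation {G : Type*} [Group G] (S : Set G) (l l' : List G) : Prop :=
  ∃ (l₁ l₂ : List G) (β : G), β ∈ S ∧ l = l₁ ++ l₂ ∧ l' = l₁ ++ β :: β⁻¹ :: l₂

/-- The equivalence relation generated by elementary Hurwitz moves (and their
inverses) together with creations and deletions of pairs `(β, β⁻¹)`, `β ∈ S`. -/
def StableEquiv {G : Type*} [Group G] (S : Set G) : List G → List G → Prop :=
  Relation.EqvGen (fun l l' => HurwitzMove l l' ∨ PairCreation S l l')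

section Aux

variable {G : Type*} [Group G] (S : Set G)

lemma stable_hmove (l₁ l₂ : List G) (a b c : G) (h : c = a * b * a⁻¹) :
    StableEquiv S (l₁ ++ a :: b :: l₂) (l₁ ++ c :: a :: l₂) := by
  subst h
  exact Relation.EqvGen.rel _ _ (Or.inl ⟨l₁, l₂, a, b, rfl, rfl⟩)

lemma stable_hmove_symm (l₁ l₂ : List G) (a b c : G) (h : c = a * b * a⁻¹) :
    StableEquiv S (l₁ ++ c :: a :: l₂) (l₁ ++ a :: b :: l₂) :=
  Relation.EqvGen.symm _ _ (stable_hmove S l₁ l₂ a b c h)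

lemma stable_create (l₁ l₂ : List G) (β : G) (h : β ∈ S) :
    StableEquiv S (l₁ ++ l₂) (l₁ ++ β :: β⁻¹ :: l₂) :=
  Relation.EqvGen.rel _ _ (Or.inr ⟨l₁, l₂, β, h, rfl, rfl⟩)

lemma stable_delete (l₁ l₂ : List G) (β : G) (h : β ∈ S) :
    StableEquiv S (l₁ ++ β :: β⁻¹ :: l₂) (l₁ ++ l₂) :=
  Relation.EqvGen.symm _ _ (stable_create S l₁ l₂ β h)

lemma stable_trans {l l' l'' : List G} (h : StableEquiv S l l')
    (h' : StableEquiv S l' l'') : StableEquiv S l l'' :=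
  Relation.EqvGen.trans _ _ _ h h'

/-- The key chain of moves, abstractly:
create `(c, c⁻¹)` at the end, push `c` two steps to the left via Hurwitz moves
(producing `D`), pull the last two entries left past `c⁻¹` by inverse Hurwitz
moves, push `c` further left (producing `E`, then `c` again at the front),
pull the remaining entries past `c⁻¹`, and finally delete `(c, c⁻¹)`. -/
lemma key_chain (A B c D E : G) (hc : c ∈ S)
    (hD : D = A * (B * c * B⁻¹) * A⁻¹)
    (hE : E = B * D * B⁻¹)
    (hc2 : c = A * E * A⁻¹) :
    StableEquiv S [A, B, A, B]
      [c * A * c⁻¹, c * B * c⁻¹, c * A * c⁻¹, c * B * c⁻¹] := by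
  have hAc : A = c⁻¹ * (c * A * c⁻¹) * (c⁻¹)⁻¹ := by group
  have hBc : B = c⁻¹ * (c * B * c⁻¹) * (c⁻¹)⁻¹ := by group
  have s1 : StableEquiv S [A, B, A, B] [A, B, A, B, c, c⁻¹] :=
    stable_create S [A, B, A, B] [] c hc
  have s2 : StableEquiv S [A, B, A, B, c, c⁻¹] [A, B, A, B * c * B⁻¹, B, c⁻¹] :=
    stable_hmove S [A, B, A] [c⁻¹] B c (B * c * B⁻¹) rfl
  have s3 : StableEquiv S [A, B, A, B * c * B⁻¹, B, c⁻¹] [A, B, D, A, B, c⁻¹] :=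
    stable_hmove S [A, B] [B, c⁻¹] A (B * c * B⁻¹) D hD
  have s4 : StableEquiv S [A, B, D, A, B, c⁻¹] [A, B, D, A, c⁻¹, c * B * c⁻¹] :=
    stable_hmove_symm S [A, B, D, A] [] c⁻¹ (c * B * c⁻¹) B hBc
  have s5 : StableEquiv S [A, B, D, A, c⁻¹, c * B * c⁻¹]
      [A, B, D, c⁻¹, c * A * c⁻¹, c * B * c⁻¹] :=
    stable_hmove_symm S [A, B, D] [c * B * c⁻¹] c⁻¹ (c * A * c⁻¹) A hAc
  have s6 : StableEquiv S [A, B, D, c⁻¹, c * A * c⁻¹, c * B * c⁻¹]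
      [A, E, B, c⁻¹, c * A * c⁻¹, c * B * c⁻¹] :=
    stable_hmove S [A] [c⁻¹, c * A * c⁻¹, c * B * c⁻¹] B D E hE
  have s7 : StableEquiv S [A, E, B, c⁻¹, c * A * c⁻¹, c * B * c⁻¹]
      [A, E, c⁻¹, c * B * c⁻¹, c * A * c⁻¹, c * B * c⁻¹] :=
    stable_hmove_symm S [A, E] [c * A * c⁻¹, c * B * c⁻¹] c⁻¹ (c * B * c⁻¹) B hBc
  have s8 : StableEquiv S [A, E, c⁻¹, c * B * c⁻¹, c * A * c⁻¹, c * B * c⁻¹]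
      [c, A, c⁻¹, c * B * c⁻¹, c * A * c⁻¹, c * B * c⁻¹] :=
    stable_hmove S [] [c⁻¹, c * B * c⁻¹, c * A * c⁻¹, c * B * c⁻¹] A E c hc2
  have s9 : StableEquiv S [c, A, c⁻¹, c * B * c⁻¹, c * A * c⁻¹, c * B * c⁻¹]
      [c, c⁻¹, c * A * c⁻¹, c * B * c⁻¹, c * A * c⁻¹, c * B * c⁻¹] :=
    stable_hmove_symm S [c] [c * B * c⁻¹, c * A * c⁻¹, c * B * c⁻¹] c⁻¹
      (c * A * c⁻¹) A hAc
  have s10 : StableEquiv S [c, c⁻¹, c * A * c⁻¹, c * B * c⁻¹, c * A * c⁻¹, c * B * c⁻¹]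
      [c * A * c⁻¹, c * B * c⁻¹, c * A * c⁻¹, c * B * c⁻¹] :=
    stable_delete S [] [c * A * c⁻¹, c * B * c⁻¹, c * A * c⁻¹, c * B * c⁻¹] c hc
  exact stable_trans S s1 (stable_trans S s2 (stable_trans S s3 (stable_trans S s4
    (stable_trans S s5 (stable_trans S s6 (stable_trans S s7 (stable_trans S s8
      (stable_trans S s9 s10))))))))

end Aux

/-- The simultaneous conjugate of
G₀ = (σ1⁻¹σ2σ1, σ2⁻¹σ3σ2, σ1⁻¹σ2σ1, σ2⁻¹σ3σ2) by σ1² can be obtained from G₀ by a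
finite sequence of Hurwitz moves and their inverses together with
creations/deletions of consecutive pairs (β, β⁻¹) with β = σ1² or β = σ1⁻². -/
theorem stmt_10 {G : Type*} [Group G] (σ1 σ2 σ3 : G)
    (h12 : σ1 * σ2 * σ1 = σ2 * σ1 * σ2)
    (h23 : σ2 * σ3 * σ2 = σ3 * σ2 * σ3)
    (h13 : σ1 * σ3 = σ3 * σ1) :
    StableEquiv ({σ1 ^ 2, σ1⁻¹ ^ 2} : Set G)
      [σ1⁻¹ * σ2 * σ1, σ2⁻¹ * σ3 * σ2, σ1⁻¹ * σ2 * σ1, σ2⁻¹ * σ3 * σ2]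
      (List.map (fun β => σ1 ^ 2 * β * (σ1 ^ 2)⁻¹)
        [σ1⁻¹ * σ2 * σ1, σ2⁻¹ * σ3 * σ2, σ1⁻¹ * σ2 * σ1, σ2⁻¹ * σ3 * σ2]) := by
  -- consequences of the braid relations
  have e1 : σ2 * σ1 * σ2⁻¹ = σ1⁻¹ * σ2 * σ1 := by
    calc σ2 * σ1 * σ2⁻¹ = σ1⁻¹ * (σ1 * σ2 * σ1) * σ2⁻¹ := by group
      _ = σ1⁻¹ * (σ2 * σ1 * σ2) * σ2⁻¹ := by rw [h12]
      _ = σ1⁻¹ * σ2 * σ1 := by group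
  have e3 : σ2⁻¹ * σ1 * σ2 = σ1 * σ2 * σ1⁻¹ := by
    calc σ2⁻¹ * σ1 * σ2 = σ2⁻¹ * (σ1 * σ2 * σ1) * σ1⁻¹ := by group
      _ = σ2⁻¹ * (σ2 * σ1 * σ2) * σ1⁻¹ := by rw [h12]
      _ = σ1 * σ2 * σ1⁻¹ := by group
  have e2 : σ2⁻¹ * σ1⁻¹ * σ2 = σ1 * σ2⁻¹ * σ1⁻¹ := by
    calc σ2⁻¹ * σ1⁻¹ * σ2 = (σ2⁻¹ * σ1 * σ2)⁻¹ := by group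
      _ = (σ1 * σ2 * σ1⁻¹)⁻¹ := by rw [e3]
      _ = σ1 * σ2⁻¹ * σ1⁻¹ := by group
  have e13 : σ3 * σ1⁻¹ = σ1⁻¹ * σ3 := by
    calc σ3 * σ1⁻¹ = σ1⁻¹ * (σ1 * σ3) * σ1⁻¹ := by group
      _ = σ1⁻¹ * (σ3 * σ1) * σ1⁻¹ := by rw [h13]
      _ = σ1⁻¹ * σ3 := by group
  -- braid relation between σ1 and B = σ2⁻¹σ3σ2
  have hbr : (σ2⁻¹ * σ3 * σ2) * σ1 * (σ2⁻¹ * σ3 * σ2) =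
      σ1 * (σ2⁻¹ * σ3 * σ2) * σ1 := by
    calc (σ2⁻¹ * σ3 * σ2) * σ1 * (σ2⁻¹ * σ3 * σ2)
        = σ2⁻¹ * σ3 * (σ2 * σ1 * σ2⁻¹) * σ3 * σ2 := by group
      _ = σ2⁻¹ * σ3 * (σ1⁻¹ * σ2 * σ1) * σ3 * σ2 := by rw [e1]
      _ = σ2⁻¹ * (σ3 * σ1⁻¹) * σ2 * (σ1 * σ3) * σ2 := by group
      _ = σ2⁻¹ * (σ1⁻¹ * σ3) * σ2 * (σ3 * σ1) * σ2 := by rw [e13, h13]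
      _ = (σ2⁻¹ * σ1⁻¹ * σ2) * σ2⁻¹ * (σ3 * σ2 * σ3) * (σ1 * σ2) := by group
      _ = (σ1 * σ2⁻¹ * σ1⁻¹) * σ2⁻¹ * (σ2 * σ3 * σ2) * (σ1 * σ2) := by
            rw [e2, ← h23]
      _ = σ1 * σ2⁻¹ * (σ1⁻¹ * σ3) * (σ2 * σ1 * σ2) := by group
      _ = σ1 * σ2⁻¹ * (σ3 * σ1⁻¹) * (σ1 * σ2 * σ1) := by rw [← e13, ← h12]
      _ = σ1 * (σ2⁻¹ * σ3 * σ2) * σ1 := by group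
  have hbr' : σ1 * (σ2⁻¹ * σ3 * σ2) * σ1 * (σ2⁻¹ * σ3 * σ2)⁻¹ =
      (σ2⁻¹ * σ3 * σ2) * σ1 := by
    calc σ1 * (σ2⁻¹ * σ3 * σ2) * σ1 * (σ2⁻¹ * σ3 * σ2)⁻¹
        = ((σ2⁻¹ * σ3 * σ2) * σ1 * (σ2⁻¹ * σ3 * σ2)) * (σ2⁻¹ * σ3 * σ2)⁻¹ := by
            rw [hbr]
      _ = (σ2⁻¹ * σ3 * σ2) * σ1 := by group
  -- A (B σ1 B⁻¹) A⁻¹ = σ3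
  have hABA : (σ1⁻¹ * σ2 * σ1) *
      ((σ2⁻¹ * σ3 * σ2) * σ1 * (σ2⁻¹ * σ3 * σ2)⁻¹) * (σ1⁻¹ * σ2 * σ1)⁻¹ = σ3 := by
    calc (σ1⁻¹ * σ2 * σ1) *
        ((σ2⁻¹ * σ3 * σ2) * σ1 * (σ2⁻¹ * σ3 * σ2)⁻¹) * (σ1⁻¹ * σ2 * σ1)⁻¹
        = (σ1⁻¹ * σ2 * σ1) * σ1⁻¹ *
          (σ1 * (σ2⁻¹ * σ3 * σ2) * σ1 * (σ2⁻¹ * σ3 * σ2)⁻¹) *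
          (σ1⁻¹ * σ2 * σ1)⁻¹ := by group
      _ = (σ1⁻¹ * σ2 * σ1) * σ1⁻¹ * ((σ2⁻¹ * σ3 * σ2) * σ1) *
          (σ1⁻¹ * σ2 * σ1)⁻¹ := by rw [hbr']
      _ = σ1⁻¹ * (σ3 * σ1) := by group
      _ = σ1⁻¹ * (σ1 * σ3) := by rw [h13]
      _ = σ3 := by group
  -- hD : σ3² = A (B σ1² B⁻¹) A⁻¹
  have hD : (σ3 : G) ^ 2 = (σ1⁻¹ * σ2 * σ1) *
      ((σ2⁻¹ * σ3 * σ2) * σ1 ^ 2 * (σ2⁻¹ * σ3 * σ2)⁻¹) * (σ1⁻¹ * σ2 * σ1)⁻¹ := by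
    calc (σ3 : G) ^ 2
        = σ3 * σ3 := by rw [pow_two]
      _ = ((σ1⁻¹ * σ2 * σ1) * ((σ2⁻¹ * σ3 * σ2) * σ1 * (σ2⁻¹ * σ3 * σ2)⁻¹) *
            (σ1⁻¹ * σ2 * σ1)⁻¹) *
          ((σ1⁻¹ * σ2 * σ1) * ((σ2⁻¹ * σ3 * σ2) * σ1 * (σ2⁻¹ * σ3 * σ2)⁻¹) *
            (σ1⁻¹ * σ2 * σ1)⁻¹) := by rw [hABA]
      _ = (σ1⁻¹ * σ2 * σ1) *
          ((σ2⁻¹ * σ3 * σ2) * σ1 ^ 2 * (σ2⁻¹ * σ3 * σ2)⁻¹) *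
          (σ1⁻¹ * σ2 * σ1)⁻¹ := by rw [pow_two]; group
  -- B σ3 B⁻¹ = σ2
  have hB1 : (σ2⁻¹ * σ3 * σ2) * σ3 * (σ2⁻¹ * σ3 * σ2)⁻¹ = σ2 := by
    calc (σ2⁻¹ * σ3 * σ2) * σ3 * (σ2⁻¹ * σ3 * σ2)⁻¹
        = σ2⁻¹ * (σ3 * σ2 * σ3) * σ2⁻¹ * σ3⁻¹ * σ2 := by group
      _ = σ2⁻¹ * (σ2 * σ3 * σ2) * σ2⁻¹ * σ3⁻¹ * σ2 := by rw [← h23]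
      _ = σ2 := by group
  have hE : (σ2 : G) ^ 2 = (σ2⁻¹ * σ3 * σ2) * σ3 ^ 2 * (σ2⁻¹ * σ3 * σ2)⁻¹ := by
    calc (σ2 : G) ^ 2
        = σ2 * σ2 := by rw [pow_two]
      _ = ((σ2⁻¹ * σ3 * σ2) * σ3 * (σ2⁻¹ * σ3 * σ2)⁻¹) *
          ((σ2⁻¹ * σ3 * σ2) * σ3 * (σ2⁻¹ * σ3 * σ2)⁻¹) := by rw [hB1]
      _ = (σ2⁻¹ * σ3 * σ2) * σ3 ^ 2 * (σ2⁻¹ * σ3 * σ2)⁻¹ := by rw [pow_two]; group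
  -- A σ2 A⁻¹ = σ1
  have hA1 : (σ1⁻¹ * σ2 * σ1) * σ2 * (σ1⁻¹ * σ2 * σ1)⁻¹ = σ1 := by
    calc (σ1⁻¹ * σ2 * σ1) * σ2 * (σ1⁻¹ * σ2 * σ1)⁻¹
        = σ1⁻¹ * (σ2 * σ1 * σ2) * σ1⁻¹ * σ2⁻¹ * σ1 := by group
      _ = σ1⁻¹ * (σ1 * σ2 * σ1) * σ1⁻¹ * σ2⁻¹ * σ1 := by rw [← h12]
      _ = σ1 := by group
  have hc2 : (σ1 : G) ^ 2 = (σ1⁻¹ * σ2 * σ1) * σ2 ^ 2 * (σ1⁻¹ * σ2 * σ1)⁻¹ := by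
    calc (σ1 : G) ^ 2
        = σ1 * σ1 := by rw [pow_two]
      _ = ((σ1⁻¹ * σ2 * σ1) * σ2 * (σ1⁻¹ * σ2 * σ1)⁻¹) *
          ((σ1⁻¹ * σ2 * σ1) * σ2 * (σ1⁻¹ * σ2 * σ1)⁻¹) := by rw [hA1]
      _ = (σ1⁻¹ * σ2 * σ1) * σ2 ^ 2 * (σ1⁻¹ * σ2 * σ1)⁻¹ := by rw [pow_two]; group
  have hc : (σ1 : G) ^ 2 ∈ ({σ1 ^ 2, σ1⁻¹ ^ 2} : Set G) := Or.inl rfl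
  have main := key_chain ({σ1 ^ 2, σ1⁻¹ ^ 2} : Set G)
    (σ1⁻¹ * σ2 * σ1) (σ2⁻¹ * σ3 * σ2) (σ1 ^ 2) (σ3 ^ 2) (σ2 ^ 2) hc hD hE hc2
  simpa using main
end

section
/- Let a be a positive integer and define the rational function f̃₁(z) = 2 − (∏_{i=1}^{2a−1} (z − (2i+1))) / (∏_{i=1}^{2a} (z − 2i)) for z ∈ ℂ with ∏_{i=1}^{2a} (z − 2i) ≠ 0. Then f̃₁ preserves the upper and lower half planes: if Im z > 0 then Im f̃₁(z) > 0, and if Im z < 0 then Im f̃₁(z) < 0. -/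
open Complex Finset Polynomial

/-! Partial fractions write `∏ (z - yᵢ) / ∏ (z - xₖ)` as `∑ₖ cₖ / (z - xₖ)` with real residues
`cₖ = ∏ᵢ (xₖ - yᵢ) / ∏_{j ≠ k} (xₖ - xⱼ)`. When the roots `yᵢ` interlace the poles `xₖ`, the
numerator and denominator of `cₖ` have the same number of negative factors, so every `cₖ > 0`.
Since `Im (c / (z - x)) = -c · Im z / |z - x|²` for real `c, x`, the imaginary part of the fraction
is `-Im z` times a positive number, and `2 - fraction` has the sign of `Im z`. -/

theorem Lagrange.eval_div_eval_nodal {F ι : Type*} [Field F] [DecidableEq ι] {s : Finset ι}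
    {v : ι → F} (hvs : Set.InjOn v s) {P : F[X]} (hP : P.degree < #s) {z : F}
    (hz : ∀ i ∈ s, z ≠ v i) :
    P.eval z / (Lagrange.nodal s v).eval z =
      ∑ i ∈ s, Lagrange.nodalWeight s v i * P.eval (v i) / (z - v i) := by
  have hnodal : (Lagrange.nodal s v).eval z ≠ 0 := Lagrange.eval_nodal_not_at_node hz
  conv_lhs => rw [Lagrange.eq_interpolate hvs hP, Lagrange.eval_interpolate_not_at_node _ hz]
  rw [mul_div_cancel_left₀ _ hnodal]
  exact sum_congr rfl fun i _ => by ring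

theorem Complex.im_ofReal_div_sub_ofReal (c x : ℝ) (z : ℂ) :
    ((c : ℂ) / (z - x)).im = -(z.im * (c / normSq (z - x))) := by
  simp only [div_im, ofReal_re, ofReal_im, sub_im]
  ring

theorem residue_pos_of_interlace {x y : ℕ → ℝ} (hxy : ∀ i, x i < y i)
    (hyx : ∀ i, y i < x (i + 1)) {n k : ℕ} (hk : k ∈ Icc 1 n) :
    0 < (∏ i ∈ Icc 1 (n - 1), (x k - y i)) / ∏ j ∈ (Icc 1 n).erase k, (x k - x j) := by
  have hx : StrictMono x := strictMono_nat_of_lt_succ fun i => (hxy i).trans (hyx i)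
  have hk' := mem_Icc.mp hk
  -- the `i`-th root lies between the poles `i` and `i + 1`; pair it with the one on the side of `k`
  have hpair : ∏ j ∈ (Icc 1 n).erase k, (x k - x j) =
      ∏ i ∈ Icc 1 (n - 1), (x k - x (if i < k then i else i + 1)) := by
    refine (prod_nbij' (fun i => if i < k then i else i + 1) (fun j => if j < k then j else j - 1)
      ?_ ?_ ?_ ?_ fun _ _ => rfl).symm
    all_goals
      intro i hi
      simp only [mem_Icc, mem_erase] at hi ⊢
      split_ifs <;> omega
  rw [hpair, ← prod_div_distrib]
  refine prod_pos fun i hi => ?_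
  split_ifs with hik
  · exact div_pos (sub_pos.2 ((hyx i).trans_le (hx.monotone hik))) (sub_pos.2 (hx hik))
  · have hki := not_lt.mp hik
    exact div_pos_of_neg_of_neg (sub_neg.2 ((hx.monotone hki).trans_lt (hxy i)))
      (sub_neg.2 (hx (Nat.lt_succ_of_le hki)))

theorem exists_pos_im_prod_div_prod_of_interlace {x y : ℕ → ℝ} (hxy : ∀ i, x i < y i)
    (hyx : ∀ i, y i < x (i + 1)) {n : ℕ} (hn : 0 < n) {z : ℂ} (hz : z.im ≠ 0) :
    ∃ T : ℝ, 0 < T ∧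
      ((∏ i ∈ Icc 1 (n - 1), (z - y i)) / ∏ i ∈ Icc 1 n, (z - x i)).im = -(z.im * T) := by
  have hx : StrictMono x := strictMono_nat_of_lt_succ fun i => (hxy i).trans (hyx i)
  have hzx : ∀ i ∈ Icc 1 n, z ≠ x i := fun i _ h => hz (by simp [h])
  have hdeg : (Lagrange.nodal (Icc 1 (n - 1)) fun i => (y i : ℂ)).degree < #(Icc 1 n) := by
    rw [Lagrange.degree_nodal, Nat.card_Icc, Nat.card_Icc]
    exact_mod_cast (by omega : n - 1 + 1 - 1 < n + 1 - 1)
  have hinj : Set.InjOn (fun i => (x i : ℂ)) (Icc 1 n) :=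
    (ofReal_injective.comp hx.injective).injOn
  have hpf := Lagrange.eval_div_eval_nodal hinj hdeg hzx
  simp only [Lagrange.eval_nodal] at hpf
  have hres : ∀ k ∈ Icc 1 n, Lagrange.nodalWeight (Icc 1 n) (fun i => (x i : ℂ)) k *
      ∏ i ∈ Icc 1 (n - 1), ((x k : ℂ) - y i) =
        (((∏ i ∈ Icc 1 (n - 1), (x k - y i)) / ∏ j ∈ (Icc 1 n).erase k, (x k - x j) : ℝ) : ℂ) := by
    intro k _
    rw [Lagrange.nodalWeight, prod_inv_distrib]
    push_cast
    ring
  rw [hpf, sum_congr rfl fun k hk => by rw [hres k hk], im_sum]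
  simp only [im_ofReal_div_sub_ofReal, sum_neg_distrib, ← mul_sum]
  refine ⟨_, sum_pos (fun k hk => div_pos (residue_pos_of_interlace hxy hyx hk) ?_)
    ⟨1, mem_Icc.2 ⟨le_rfl, hn⟩⟩, rfl⟩
  exact normSq_pos.2 (sub_ne_zero.2 (hzx k hk))

theorem stmt_15_general (a : ℕ) (ha : 0 < a) (z : ℂ) :
    (0 < z.im →
      0 < (2 - (∏ i ∈ Finset.Icc 1 (2 * a - 1), (z - (2 * (i : ℂ) + 1))) /
            (∏ i ∈ Finset.Icc 1 (2 * a), (z - 2 * (i : ℂ)))).im) ∧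
    (z.im < 0 →
      (2 - (∏ i ∈ Finset.Icc 1 (2 * a - 1), (z - (2 * (i : ℂ) + 1))) /
            (∏ i ∈ Finset.Icc 1 (2 * a), (z - 2 * (i : ℂ)))).im < 0) := by
  have key (hz : z.im ≠ 0) : ∃ T : ℝ, 0 < T ∧
      (2 - (∏ i ∈ Icc 1 (2 * a - 1), (z - (2 * (i : ℂ) + 1))) /
        (∏ i ∈ Icc 1 (2 * a), (z - 2 * (i : ℂ)))).im = z.im * T := by
    obtain ⟨T, hT, him⟩ := exists_pos_im_prod_div_prod_of_interlace (n := 2 * a)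
      (x := fun i => 2 * i) (y := fun i => 2 * i + 1) (fun i => by simp)
      (fun i => by push_cast; linarith) (by omega) hz
    push_cast at him
    exact ⟨T, hT, by simp [him]⟩
  constructor
  · intro h
    obtain ⟨T, hT, him⟩ := key h.ne'
    rw [him]
    positivity
  · intro h
    obtain ⟨T, hT, him⟩ := key h.ne
    rw [him]
    exact mul_neg_of_neg_of_pos h hT

/-- The rational function
f̃₁(z) = 2 − (∏_{i=1}^{2a−1} (z − (2i+1))) / (∏_{i=1}^{2a} (z − 2i))
preserves the upper and lower half planes. -/
theorem stmt_15 (a : ℕ) (ha : 0 < a) (z : ℂ)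
    (hz : (∏ i ∈ Finset.Icc 1 (2 * a), (z - 2 * (i : ℂ))) ≠ 0) :
    (0 < z.im →
      0 < (2 - (∏ i ∈ Finset.Icc 1 (2 * a - 1), (z - (2 * (i : ℂ) + 1))) /
            (∏ i ∈ Finset.Icc 1 (2 * a), (z - 2 * (i : ℂ)))).im) ∧
    (z.im < 0 →
      (2 - (∏ i ∈ Finset.Icc 1 (2 * a - 1), (z - (2 * (i : ℂ) + 1))) /
            (∏ i ∈ Finset.Icc 1 (2 * a), (z - 2 * (i : ℂ)))).im < 0) :=
  stmt_15_general a ha z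
end

section
/- Let c be a positive integer and define the rational function g̃₁(z) = −2 + (∏_{i=1}^{2c−1} (z + 2i+1)) / (∏_{i=1}^{2c} (z + 2i)) for z ∈ ℂ with ∏_{i=1}^{2c} (z + 2i) ≠ 0. Then g̃₁ exchanges the upper and lower half planes: if Im z > 0 then Im g̃₁(z) < 0, and if Im z < 0 then Im g̃₁(z) > 0. -/
open Complex

lemma shift_ne (z : ℂ) (hz : z.im ≠ 0) (k : ℕ) : z + 2 * (k : ℂ) ≠ 0 := by
  intro h
  apply hz
  have := congrArg Complex.im h
  simpa using this

lemma pf_aux (a u d : ℂ) (hu : u ≠ 0) (hd : d ≠ 0) (hv : u + d ≠ 0) :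
    a / u * ((u + d - 1) / (u + d)) = a * (d - 1) / d / u + a / d / (u + d) := by
  field_simp
  ring

lemma pf (n : ℕ) (hn : 1 ≤ n) :
    ∃ a : ℕ → ℝ, (∀ k ∈ Finset.Icc 1 n, 0 < a k) ∧
      ∀ z : ℂ, z.im ≠ 0 →
        (∏ i ∈ Finset.Icc 1 (n - 1), (z + (2 * (i : ℂ) + 1))) /
          (∏ i ∈ Finset.Icc 1 n, (z + 2 * (i : ℂ))) =
        ∑ k ∈ Finset.Icc 1 n, (a k : ℂ) / (z + 2 * (k : ℂ)) := by
  induction n, hn using Nat.le_induction with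
  | base =>
    refine ⟨fun _ => 1, fun k _ => one_pos, fun z hz => ?_⟩
    simp
  | succ n hn ih =>
    obtain ⟨m, rfl⟩ : ∃ m, n = m + 1 := ⟨n - 1, (Nat.succ_pred_eq_of_pos hn).symm⟩
    obtain ⟨a, hpos, heq⟩ := ih
    simp only [Nat.add_sub_cancel] at heq ⊢
    refine ⟨fun k => if k = m + 2 then ∑ j ∈ Finset.Icc 1 (m + 1), a j / (2 * (m + 2) - 2 * j)
      else a k * (2 * (m + 2 : ℝ) - 2 * k - 1) / (2 * (m + 2 : ℝ) - 2 * k), ?_, ?_⟩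
  -- positivity
    · intro k hk
      rcases Finset.mem_Icc.mp hk with ⟨hk1, hk2⟩
      by_cases h : k = m + 2
      · simp only [h, if_pos rfl]
        apply Finset.sum_pos
        · intro j hj
          rcases Finset.mem_Icc.mp hj with ⟨hj1, hj2⟩
          have hj2' : (j : ℝ) ≤ m + 1 := by exact_mod_cast hj2
          apply div_pos (hpos j hj)
          nlinarith
        · exact ⟨1, Finset.mem_Icc.mpr ⟨le_refl 1, by omega⟩⟩
      · have hk2' : k ≤ m + 1 := by omega
        have hkr : (k : ℝ) ≤ m + 1 := by exact_mod_cast hk2'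
        simp only [if_neg h]
        have hak := hpos k (Finset.mem_Icc.mpr ⟨hk1, hk2'⟩)
        apply div_pos
        · nlinarith
        · nlinarith
    · intro z hz
      have hk := shift_ne z hz
      have htop1 : (∏ i ∈ Finset.Icc 1 (m + 1), (z + (2 * (i : ℂ) + 1))) =
          (∏ i ∈ Finset.Icc 1 m, (z + (2 * (i : ℂ) + 1))) * (z + (2 * ((m : ℂ) + 1) + 1)) := by
        rw [Finset.prod_Icc_succ_top (by omega)]
        push_cast
        ring
      have htop2 : (∏ i ∈ Finset.Icc 1 (m + 2), (z + 2 * (i : ℂ))) =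
          (∏ i ∈ Finset.Icc 1 (m + 1), (z + 2 * (i : ℂ))) * (z + 2 * ((m : ℂ) + 2)) := by
        rw [show m + 2 = (m + 1) + 1 from rfl, Finset.prod_Icc_succ_top (by omega)]
        push_cast
        ring
      rw [htop1, htop2, mul_div_mul_comm, heq z hz]
      rw [Finset.sum_Icc_succ_top (by omega : 1 ≤ m + 2)]
      simp only [if_pos rfl]
      push_cast
      rw [Finset.sum_div, Finset.sum_mul, ← Finset.sum_add_distrib]
      apply Finset.sum_congr rfl
      intro k hk'
      rcases Finset.mem_Icc.mp hk' with ⟨hk1, hk2⟩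
      have hne : k ≠ m + 2 := by omega
      simp only [if_neg hne]
      have h1 : z + 2 * (k : ℂ) ≠ 0 := hk k
      have h2 : z + 2 * ((m : ℂ) + 2) ≠ 0 := by
        have := hk (m + 2); push_cast at this; exact this
      have h3 : (2 * ((m : ℂ) + 2) - 2 * k) ≠ 0 := by
        intro h
        have h' : ((2 * (m + 2 : ℝ) - 2 * k : ℝ) : ℂ) = 0 := by push_cast; linear_combination h
        have hr : (2 * (m + 2 : ℝ) - 2 * k) = 0 := by exact_mod_cast h'
        have hkr : (k : ℝ) ≤ m + 1 := by exact_mod_cast hk2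
        nlinarith
      have hv : z + 2 * (k : ℂ) + (2 * ((m : ℂ) + 2) - 2 * (k : ℂ)) ≠ 0 := by
        intro hh; exact h2 (by linear_combination hh)
      have haux := pf_aux (a k) (z + 2 * (k : ℂ)) (2 * ((m : ℂ) + 2) - 2 * (k : ℂ)) h1 h3 hv
      push_cast
      linear_combination haux

/-- The rational function
g̃₁(z) = −2 + (∏_{i=1}^{2c−1} (z + 2i+1)) / (∏_{i=1}^{2c} (z + 2i))
exchanges the upper and lower half planes. -/
theorem stmt_16 (c : ℕ) (hc : 0 < c) (z : ℂ)
    (hz : (∏ i ∈ Finset.Icc 1 (2 * c), (z + 2 * (i : ℂ))) ≠ 0) :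
    (0 < z.im →
      (-2 + (∏ i ∈ Finset.Icc 1 (2 * c - 1), (z + (2 * (i : ℂ) + 1))) /
            (∏ i ∈ Finset.Icc 1 (2 * c), (z + 2 * (i : ℂ)))).im < 0) ∧
    (z.im < 0 →
      0 < (-2 + (∏ i ∈ Finset.Icc 1 (2 * c - 1), (z + (2 * (i : ℂ) + 1))) /
            (∏ i ∈ Finset.Icc 1 (2 * c), (z + 2 * (i : ℂ)))).im) := by
  obtain ⟨a, hpos, heq⟩ := pf (2 * c) (by omega)
  have key : ∀ hzi : z.im ≠ 0,
      (-2 + (∏ i ∈ Finset.Icc 1 (2 * c - 1), (z + (2 * (i : ℂ) + 1))) /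
            (∏ i ∈ Finset.Icc 1 (2 * c), (z + 2 * (i : ℂ)))).im =
      ∑ k ∈ Finset.Icc 1 (2 * c), a k * (-(z.im) / Complex.normSq (z + 2 * (k : ℂ))) := by
    intro hzi
    rw [heq z hzi, add_im, Complex.im_sum,
      show ((-2 : ℂ)).im = 0 by norm_num, zero_add]
    apply Finset.sum_congr rfl
    intro k hk
    rw [div_eq_mul_inv]
    simp [Complex.mul_im, Complex.inv_im, Complex.inv_re]
  constructor
  · intro h
    rw [key (ne_of_gt h)]
    apply Finset.sum_neg
    · intro k hk
      have hn : (0 : ℝ) < Complex.normSq (z + 2 * (k : ℂ)) :=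
        Complex.normSq_pos.mpr (shift_ne z (ne_of_gt h) k)
      have := hpos k hk
      apply mul_neg_of_pos_of_neg this
      apply div_neg_of_neg_of_pos (by linarith) hn
    · exact ⟨1, Finset.mem_Icc.mpr ⟨le_refl 1, by omega⟩⟩
  · intro h
    rw [key (ne_of_lt h)]
    apply Finset.sum_pos
    · intro k hk
      have hn : (0 : ℝ) < Complex.normSq (z + 2 * (k : ℂ)) :=
        Complex.normSq_pos.mpr (shift_ne z (ne_of_lt h) k)
      have := hpos k hk
      apply mul_pos this
      apply div_pos (by linarith) hn
    · exact ⟨1, Finset.mem_Icc.mpr ⟨le_refl 1, by omega⟩⟩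
end

section
/- Let a be a positive integer and define f̃₁(x) = 2 − (∏_{i=1}^{2a−1} (x − (2i+1))) / (∏_{i=1}^{2a} (x − 2i)). Then f̃₁ has no real critical points: for every real x with ∏_{i=1}^{2a} (x − 2i) ≠ 0, the derivative of f̃₁ at x is strictly positive; in particular f̃₁ is strictly monotone increasing on each interval of ℝ not containing a pole. -/
/-!
Write `Q(x) = ∏_{k=1}^{2a} (x - 2k)` and `P(x) = ∏_{i=1}^{2a-1} (x - (2i+1))`. Since `deg P < deg Q`
and `Q` has simple roots, `P/Q = ∑_k c_k / (x - 2k)` with residues `c_k = P(2k) / Q'(2k)`, so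
`f̃₁' = ∑_k c_k / (x - 2k)^2`. The roots of `P` interlace those of `Q`, so `P(2k)` and `Q'(2k)` both
have exactly `2a - k` negative factors: every residue is positive, hence so is `f̃₁'`.
-/

open Finset Polynomial Lagrange Filter Topology

/-- The rational function f̃₁(x) = 2 − (∏_{i=1}^{2a−1} (x−(2i+1))) / (∏_{i=1}^{2a} (x−2i))
as a real function. -/
noncomputable def ftilde (a : ℕ) (x : ℝ) : ℝ :=
  2 - (∏ i ∈ Finset.Icc 1 (2 * a - 1), (x - (2 * (i : ℝ) + 1))) /
      (∏ i ∈ Finset.Icc 1 (2 * a), (x - 2 * (i : ℝ)))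

section PartialFractions

variable {ι : Type*} {s : Finset ι}

theorem hasDerivAt_sum_div_sub {v : ι → ℝ} {x : ℝ} (c : ι → ℝ) (hx : ∀ i ∈ s, x ≠ v i) :
    HasDerivAt (fun y => ∑ i ∈ s, c i / (y - v i)) (-∑ i ∈ s, c i / (x - v i) ^ 2) x := by
  rw [← sum_neg_distrib]
  refine HasDerivAt.fun_sum fun i hi => ?_
  exact ((hasDerivAt_const x (c i)).fun_div ((hasDerivAt_id' x).sub_const (v i))
    (sub_ne_zero.mpr (hx i hi))).congr_deriv (by ring)

variable [DecidableEq ι]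

noncomputable def residue {F : Type*} [Field F] (s : Finset ι) (v : ι → F) (p : F[X]) (i : ι) : F :=
  nodalWeight s v i * p.eval (v i)

theorem eval_div_eval_nodal_eq_sum_residue {F : Type*} [Field F] {v : ι → F} {p : F[X]} {x : F}
    (hvs : Set.InjOn v s) (hp : p.degree < #s) (hx : ∀ i ∈ s, x ≠ v i) :
    p.eval x / (nodal s v).eval x = ∑ i ∈ s, residue s v p i / (x - v i) := by
  have hQ : (nodal s v).eval x ≠ 0 := eval_nodal_not_at_node hx
  conv_lhs => rw [eq_interpolate hvs hp, eval_interpolate_not_at_node _ hx, mul_div_cancel_left₀ _ hQ]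
  exact sum_congr rfl fun i _ => by rw [residue]; ring

theorem hasDerivAt_eval_div_eval_nodal {v : ι → ℝ} {p : ℝ[X]} {x : ℝ} (hvs : Set.InjOn v s) (hp : p.degree < #s)
    (hx : ∀ i ∈ s, x ≠ v i) :
    HasDerivAt (fun y => p.eval y / (nodal s v).eval y)
      (-∑ i ∈ s, residue s v p i / (x - v i) ^ 2) x := by
  have hnear : ∀ᶠ y in 𝓝 x, ∀ i ∈ s, y ≠ v i :=
    (eventually_all_finset s).mpr fun i hi => eventually_ne_nhds (hx i hi)
  exact (hasDerivAt_sum_div_sub _ hx).congr_of_eventuallyEq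
    (hnear.mono fun y hy => eval_div_eval_nodal_eq_sum_residue hvs hp hy)

end PartialFractions

namespace Ftilde

noncomputable def pole (k : ℕ) : ℝ := 2 * k

noncomputable def numerator (a : ℕ) : ℝ[X] :=
  ∏ i ∈ Icc 1 (2 * a - 1), (X - C (2 * (i : ℝ) + 1))

theorem eval_numerator (a : ℕ) (x : ℝ) :
    (numerator a).eval x = ∏ i ∈ Icc 1 (2 * a - 1), (x - (2 * (i : ℝ) + 1)) := by
  simp [numerator, eval_prod]

theorem ftilde_eq (a : ℕ) :
    ftilde a = fun x => 2 - (numerator a).eval x / (nodal (Icc 1 (2 * a)) pole).eval x := by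
  funext x
  rw [ftilde, eval_numerator, eval_nodal]
  rfl

theorem pole_injective : Function.Injective pole := fun i j h => by
  simpa [pole] using h

theorem degree_numerator_lt {a : ℕ} (ha : 0 < a) : (numerator a).degree < #(Icc 1 (2 * a)) := by
  rw [numerator, degree_prod]
  simp only [degree_X_sub_C, sum_const, Nat.card_Icc, nsmul_eq_mul, mul_one]
  exact_mod_cast (by omega : 2 * a + 1 - 1 - 1 < 2 * a + 1 - 1)

theorem residue_pos {a k : ℕ} (hk : k ∈ Icc 1 (2 * a)) :
    0 < residue (Icc 1 (2 * a)) pole (numerator a) k := by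
  have hk := mem_Icc.mp hk
  -- Matching the `i`-th root `2i + 1` of `P` with the `i`-th pole other than `2k` pairs up factors
  -- of `P(2k)` and `Q'(2k)` that have the same sign.
  have hmatch : ∏ j ∈ (Icc 1 (2 * a)).erase k, (pole k - pole j)⁻¹ =
      ∏ i ∈ Icc 1 (2 * a - 1), (pole k - pole (if i < k then i else i + 1))⁻¹ := by
    refine (prod_nbij' (fun i => if i < k then i else i + 1) (fun j => if j < k then j else j - 1)
      ?_ ?_ ?_ ?_ fun _ _ => rfl).symm <;>
    · intro i hi
      simp only [mem_Icc, mem_erase] at hi ⊢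
      split_ifs <;> omega
  rw [residue, nodalWeight, hmatch, eval_numerator, ← prod_mul_distrib]
  refine prod_pos fun i _ => ?_
  simp only [pole]
  split_ifs with hik
  · have : (i : ℝ) + 1 ≤ k := by exact_mod_cast hik
    exact mul_pos (inv_pos.mpr (by linarith)) (by linarith)
  · have : (k : ℝ) ≤ i := by exact_mod_cast not_lt.mp hik
    push_cast
    exact mul_pos_of_neg_of_neg (inv_lt_zero.mpr (by linarith)) (by linarith)

theorem hasDerivAt_ftilde {a : ℕ} (ha : 0 < a) {x : ℝ} (hx : ∀ k ∈ Icc 1 (2 * a), x ≠ pole k) :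
    HasDerivAt (ftilde a)
      (∑ k ∈ Icc 1 (2 * a), residue (Icc 1 (2 * a)) pole (numerator a) k / (x - pole k) ^ 2) x := by
  rw [ftilde_eq]
  simpa using
    (hasDerivAt_eval_div_eval_nodal pole_injective.injOn (degree_numerator_lt ha) hx).const_sub 2

theorem deriv_ftilde_pos {a : ℕ} (ha : 0 < a) {x : ℝ} (hx : ∀ k ∈ Icc 1 (2 * a), x ≠ pole k) :
    0 < deriv (ftilde a) x := by
  rw [(hasDerivAt_ftilde ha hx).deriv]
  refine sum_pos (fun k hk => div_pos (residue_pos hk) ?_) (nonempty_Icc.mpr (by omega))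
  have := sub_ne_zero.mpr (hx k hk)
  positivity

end Ftilde

open Ftilde in
/-- f̃₁ has no real critical points: at every real point which is not a
pole its derivative is strictly positive; in particular f̃₁ is strictly monotone
increasing on each interval of ℝ not containing a pole. -/
theorem stmt_17 (a : ℕ) (ha : 0 < a) :
    (∀ x : ℝ, (∏ i ∈ Finset.Icc 1 (2 * a), (x - 2 * (i : ℝ))) ≠ 0 →
      0 < deriv (ftilde a) x) ∧
    (∀ x y : ℝ, x < y →
      (∀ t ∈ Set.Icc x y, (∏ i ∈ Finset.Icc 1 (2 * a), (t - 2 * (i : ℝ))) ≠ 0) →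
      ftilde a x < ftilde a y) := by
  have hpole : ∀ x : ℝ, (∏ i ∈ Icc 1 (2 * a), (x - 2 * (i : ℝ))) ≠ 0 →
      ∀ k ∈ Icc 1 (2 * a), x ≠ pole k :=
    fun x hx k hk => sub_ne_zero.mp (prod_ne_zero_iff.mp hx k hk)
  refine ⟨fun x hx => deriv_ftilde_pos ha (hpole x hx), fun x y hxy hQ => ?_⟩
  have hcont : ContinuousOn (ftilde a) (Set.Icc x y) := fun t ht =>
    (hasDerivAt_ftilde ha (hpole t (hQ t ht))).continuousAt.continuousWithinAt
  exact strictMonoOn_of_deriv_pos (convex_Icc x y) hcont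
    (fun t ht => deriv_ftilde_pos ha (hpole t (hQ t (interior_subset ht))))
    (Set.left_mem_Icc.2 hxy.le) (Set.right_mem_Icc.2 hxy.le) hxy
end

section
/- Let a be a positive integer and let c be a real number with c ≠ 2. Then the real polynomial h(x) := (c − 2)·∏_{i=1}^{2a} (x − 2i) + ∏_{i=1}^{2a−1} (x − (2i+1)), which has degree 2a, has 2a distinct real roots; equivalently, the equation f̃₁(x) = c, where f̃₁(x) = 2 − (∏_{i=1}^{2a−1}(x−(2i+1)))/(∏_{i=1}^{2a}(x−2i)), has exactly 2a distinct real solutions. -/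
open Polynomial Finset Filter

/-- Product of negative reals has sign `(-1)^card`. -/
private lemma neg_prod_pos {s : Finset ℕ} {f : ℕ → ℝ} (h : ∀ i ∈ s, f i < 0) :
    0 < (-1 : ℝ) ^ s.card * ∏ i ∈ s, f i := by
  classical
  induction s using Finset.cons_induction with
  | empty => simp
  | cons a s ha ih =>
    rw [Finset.prod_cons, Finset.card_cons]
    have h1 := ih (fun i hi => h i (Finset.mem_cons_of_mem hi))
    have h2 := h a (Finset.mem_cons_self a s)
    rw [pow_succ]
    nlinarith

/-- Sign of `Q(2j)`. -/
private lemma signQ (a j : ℕ) (hj1 : 1 ≤ j) (hj2 : j ≤ 2 * a) :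
    0 < (-1 : ℝ) ^ j * ∏ i ∈ Finset.Icc 1 (2 * a - 1), (2 * (j : ℝ) - (2 * (i : ℝ) + 1)) := by
  have hsplit : (∏ i ∈ Finset.Ico 1 j, (2 * (j:ℝ) - (2 * (i:ℝ) + 1))) *
      (∏ i ∈ Finset.Ico j (2 * a), (2 * (j:ℝ) - (2 * (i:ℝ) + 1))) =
      ∏ i ∈ Finset.Ico 1 (2 * a), (2 * (j:ℝ) - (2 * (i:ℝ) + 1)) :=
    Finset.prod_Ico_consecutive _ hj1 hj2
  have hIcc : Finset.Icc 1 (2 * a - 1) = Finset.Ico 1 (2 * a) := by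
    rw [← Finset.Ico_add_one_right_eq_Icc]
    congr 1
    omega
  rw [hIcc, ← hsplit]
  have hA : 0 < ∏ i ∈ Finset.Ico 1 j, (2 * (j:ℝ) - (2 * (i:ℝ) + 1)) := by
    apply Finset.prod_pos
    intro i hi
    rw [Finset.mem_Ico] at hi
    have : (i : ℝ) + 1 ≤ (j : ℝ) := by exact_mod_cast hi.2
    linarith
  have hBneg : ∀ i ∈ Finset.Ico j (2 * a), 2 * (j:ℝ) - (2 * (i:ℝ) + 1) < 0 := by
    intro i hi
    rw [Finset.mem_Ico] at hi
    have : (j : ℝ) ≤ (i : ℝ) := by exact_mod_cast hi.1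
    linarith
  have hB := neg_prod_pos hBneg
  rw [Nat.card_Ico] at hB
  have h1 : ((-1:ℝ)) ^ (2 * a - j) * (-1:ℝ) ^ j = 1 := by
    rw [← pow_add, Nat.sub_add_cancel hj2, pow_mul]
    norm_num
  have h2 : ((-1:ℝ)) ^ j * (-1:ℝ) ^ j = 1 := by
    rw [← pow_add, ← two_mul, pow_mul]
    norm_num
  have hpow : ((-1:ℝ)) ^ (2 * a - j) = (-1:ℝ) ^ j :=
    mul_right_cancel₀ (pow_ne_zero j (by norm_num : (-1:ℝ) ≠ 0)) (h1.trans h2.symm)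
  rw [← hpow]
  nlinarith [mul_pos hA hB]

/-- If a continuous function alternates sign along `n+1` points, its zero set has
at least `n` elements. -/
private lemma alt_sign_card (g : ℝ → ℝ) (hg : Continuous g) (n : ℕ) (t : ℕ → ℝ)
    (S : Set ℝ) (hS : ∀ x, g x = 0 → x ∈ S) (hfin : S.Finite)
    (hmono : ∀ k, k < n → t k < t (k + 1))
    (halt : ∀ k, k < n → g (t k) * g (t (k + 1)) < 0) :
    n ≤ S.ncard := by
  have tm : ∀ j, j ≤ n → ∀ i, i ≤ j → t i ≤ t j := by
    intro j
    induction j with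
    | zero => intro _ i hi; rw [Nat.le_zero.mp hi]
    | succ j ih =>
      intro hjn i hi
      rcases Nat.eq_or_lt_of_le hi with rfl | hlt
      · exact le_refl _
      · exact le_trans (ih (by omega) i (by omega))
          (le_of_lt (hmono j (by omega)))
  have key : ∀ k : Fin n, ∃ r, r ∈ Set.Ioo (t k.1) (t (k.1 + 1)) ∧ g r = 0 := by
    rintro ⟨k, hk⟩
    have hm := hmono k hk
    have ha := halt k hk
    rcases lt_or_ge (g (t k)) 0 with h1 | h1
    · have h2 : 0 < g (t (k + 1)) := by nlinarith
      obtain ⟨r, hr, hr0⟩ := intermediate_value_Ioo hm.le hg.continuousOn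
        (Set.mem_Ioo.mpr ⟨h1, h2⟩)
      exact ⟨r, hr, hr0⟩
    · have hne : g (t k) ≠ 0 := by
        intro h0
        rw [h0, zero_mul] at ha
        exact lt_irrefl 0 ha
      have h1' : 0 < g (t k) := lt_of_le_of_ne h1 (Ne.symm hne)
      have h2 : g (t (k + 1)) < 0 := by nlinarith
      obtain ⟨r, hr, hr0⟩ := intermediate_value_Ioo' hm.le hg.continuousOn
        (Set.mem_Ioo.mpr ⟨h2, h1'⟩)
      exact ⟨r, hr, hr0⟩
  choose r hr hr0 using key
  have hsm : StrictMono r := by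
    intro k m hkm
    have h1 : r k < t (k.1 + 1) := (hr k).2
    have h2 : t m.1 < r m := (hr m).1
    have h3 : t (k.1 + 1) ≤ t m.1 := tm _ (le_of_lt m.2) _ (Nat.succ_le_of_lt hkm)
    linarith
  have hsub : Set.range r ⊆ S := by
    rintro x ⟨k, rfl⟩
    exact hS _ (hr0 k)
  have hcard : (Set.range r).ncard = n := by
    rw [← Nat.card_coe_set_eq, Nat.card_range_of_injective hsm.injective,
      Nat.card_eq_fintype_card, Fintype.card_fin]
  calc n = (Set.range r).ncard := hcard.symm
    _ ≤ S.ncard := Set.ncard_le_ncard hsub hfin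

/-- For a ≥ 1 and real c ≠ 2, the degree-2a real polynomial
h(x) = (c − 2)·∏_{i=1}^{2a} (x − 2i) + ∏_{i=1}^{2a−1} (x − (2i+1))
has exactly 2a distinct real roots; equivalently the equation f̃₁(x) = c has exactly
2a distinct real solutions. -/
theorem stmt_18 (a : ℕ) (ha : 0 < a) (c : ℝ) (hc : c ≠ 2) :
    Set.ncard {x : ℝ |
      (c - 2) * (∏ i ∈ Finset.Icc 1 (2 * a), (x - 2 * (i : ℝ))) +
        (∏ i ∈ Finset.Icc 1 (2 * a - 1), (x - (2 * (i : ℝ) + 1))) = 0} = 2 * a := by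
  classical
  set n := 2 * a with hn
  have hn0 : 0 < n := by omega
  have hc' : c - 2 ≠ 0 := sub_ne_zero.mpr hc
  set P : Polynomial ℝ := ∏ i ∈ Finset.Icc 1 n, (X - C (2 * (i:ℝ))) with hP
  set Q : Polynomial ℝ := ∏ i ∈ Finset.Icc 1 (n - 1), (X - C (2 * (i:ℝ) + 1)) with hQ
  set h : Polynomial ℝ := C (c - 2) * P + Q with hh
  have hPm : P.Monic := monic_prod_of_monic _ _ fun i _ => monic_X_sub_C _
  have hQm : Q.Monic := monic_prod_of_monic _ _ fun i _ => monic_X_sub_C _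
  have hPdeg : P.natDegree = n := by
    rw [hP, natDegree_prod_of_monic _ _ fun i _ => monic_X_sub_C _]
    simp only [natDegree_X_sub_C]
    rw [Finset.sum_const, smul_eq_mul, mul_one, Nat.card_Icc]
    omega
  have hQdeg : Q.natDegree = n - 1 := by
    rw [hQ, natDegree_prod_of_monic _ _ fun i _ => monic_X_sub_C _]
    simp only [natDegree_X_sub_C]
    rw [Finset.sum_const, smul_eq_mul, mul_one, Nat.card_Icc]
    omega
  have hdegCP : (C (c - 2) * P).degree = (n : WithBot ℕ) := by
    rw [degree_C_mul hc', degree_eq_natDegree hPm.ne_zero, hPdeg]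
  have hQlt : Q.degree < (n : WithBot ℕ) := by
    calc Q.degree ≤ (Q.natDegree : WithBot ℕ) := degree_le_natDegree
      _ < (n : WithBot ℕ) := by
          rw [hQdeg]
          exact_mod_cast (by omega : n - 1 < n)
  have hdeg : h.degree = (n : WithBot ℕ) := by
    rw [hh, degree_add_eq_left_of_degree_lt (by rw [hdegCP]; exact hQlt), hdegCP]
  have hne : h ≠ 0 := by
    intro h0
    rw [h0, degree_zero] at hdeg
    exact (by simp : (⊥ : WithBot ℕ) ≠ (n : WithBot ℕ)) hdeg
  have hnat : h.natDegree = n := natDegree_eq_of_degree_eq_some hdeg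
  have hSeq : {x : ℝ |
      (c - 2) * (∏ i ∈ Finset.Icc 1 n, (x - 2 * (i : ℝ))) +
        (∏ i ∈ Finset.Icc 1 (n - 1), (x - (2 * (i : ℝ) + 1))) = 0} =
      {x : ℝ | h.eval x = 0} := by
    ext x
    simp [hh, hP, hQ, eval_prod]
  rw [hSeq]
  have hroots : {x : ℝ | h.eval x = 0} = ((h.roots.toFinset : Finset ℝ) : Set ℝ) := by
    ext x
    simp [Multiset.mem_toFinset, mem_roots hne, IsRoot]
  have hfin : {x : ℝ | h.eval x = 0}.Finite := by
    rw [hroots]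
    exact (h.roots.toFinset).finite_toSet
  have hub : {x : ℝ | h.eval x = 0}.ncard ≤ n := by
    rw [hroots, Set.ncard_coe_finset]
    exact le_trans (Multiset.toFinset_card_le _) (le_trans (card_roots' h) (le_of_eq hnat))
  have hlead : h.leadingCoeff = c - 2 := by
    rw [Polynomial.leadingCoeff, hnat, hh, coeff_add, coeff_C_mul,
      show Q.coeff n = 0 from coeff_eq_zero_of_natDegree_lt (by rw [hQdeg]; omega),
      show P.coeff n = 1 by rw [← hPdeg]; exact hPm.coeff_natDegree]
    ring
  have hcont : Continuous fun x => h.eval x := h.continuous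
  have hevalP : ∀ j : ℕ, 1 ≤ j → j ≤ n → P.eval (2 * (j:ℝ)) = 0 := by
    intro j h1 h2
    rw [hP, eval_prod]
    exact Finset.prod_eq_zero (Finset.mem_Icc.mpr ⟨h1, h2⟩) (by simp)
  have hevalh : ∀ j : ℕ, 1 ≤ j → j ≤ n → 0 < (-1:ℝ) ^ j * h.eval (2 * (j:ℝ)) := by
    intro j h1 h2
    have he : h.eval (2 * (j:ℝ)) =
        ∏ i ∈ Finset.Icc 1 (n - 1), (2 * (j:ℝ) - (2 * (i:ℝ) + 1)) := by
      simp [hh, hQ, eval_prod, hevalP j h1 h2]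
    rw [he, hn]
    exact signQ a j h1 (by omega)
  have hsq : ∀ k : ℕ, ((-1:ℝ)) ^ k * (-1:ℝ) ^ k = 1 := by
    intro k
    rw [← pow_add, ← two_mul, pow_mul]
    norm_num
  have hmulneg : ∀ (u v : ℝ) (k : ℕ),
      0 < (-1:ℝ) ^ k * u → 0 < (-1:ℝ) ^ (k + 1) * v → u * v < 0 := by
    intro u v k h1 h2
    rw [pow_succ] at h2
    nlinarith [hsq k]
  have hnpow : ((-1:ℝ)) ^ n = 1 := by
    rw [hn, pow_mul]
    norm_num
  have hlb : n ≤ {x : ℝ | h.eval x = 0}.ncard := by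
    rcases lt_or_gt_of_ne hc with hclt | hcgt
    · -- c < 2 : extra root to the right
      have htend : Tendsto (fun x => h.eval x) atTop atBot :=
        h.tendsto_atBot_of_leadingCoeff_nonpos
          (by rw [hdeg]; exact_mod_cast hn0) (by rw [hlead]; linarith)
      obtain ⟨T, hT1, hT2⟩ :=
        ((htend.eventually (eventually_lt_atBot 0)).and
          (eventually_gt_atTop (2 * (n:ℝ)))).exists
      set t : ℕ → ℝ := fun k => if k < n then 2 * ((k:ℝ) + 1) else T with ht
      have hsgn : ∀ k, k ≤ n → 0 < (-1:ℝ) ^ (k + 1) * h.eval (t k) := by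
        intro k hk
        rcases lt_or_ge k n with hkn | hkn
        · have htk : t k = 2 * (((k + 1 : ℕ)):ℝ) := by
            simp only [ht]
            rw [if_pos hkn]
            push_cast
            ring
          rw [htk]
          exact hevalh (k + 1) (by omega) (by omega)
        · have hkeq : k = n := by omega
          have htk : t k = T := by
            simp only [ht]
            rw [if_neg (by omega : ¬ k < n)]
          have hT1' : h.eval T < 0 := hT1
          rw [htk, hkeq, pow_succ, hnpow]
          nlinarith
      apply alt_sign_card _ hcont n t _ (fun x hx => hx) hfin
      · intro k hk
        rcases lt_or_ge (k + 1) n with hk1 | hk1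
        · simp only [ht]
          rw [if_pos hk, if_pos hk1]
          push_cast
          linarith
        · have hkeq : k + 1 = n := by omega
          simp only [ht]
          rw [if_pos hk, if_neg (by omega : ¬ k + 1 < n)]
          have hT2' : 2 * (n:ℝ) < T := hT2
          have hck : ((k:ℝ) + 1) = (n : ℝ) := by exact_mod_cast hkeq
          linarith
      · intro k hk
        exact hmulneg _ _ (k + 1) (hsgn k (by omega)) (hsgn (k + 1) (by omega))
    · -- c > 2 : extra root to the left, via h.comp (-X)
      have h2ne : h.comp (-X) ≠ 0 := by
        intro h0
        have : (h.comp (-X)).natDegree = n := by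
          rw [natDegree_comp, hnat]
          simp
        rw [h0, natDegree_zero] at this
        omega
      have h2nat : (h.comp (-X)).natDegree = n := by
        rw [natDegree_comp, hnat]
        simp
      have h2lead : (h.comp (-X)).leadingCoeff = c - 2 := by
        rw [leadingCoeff_comp (by simp), hlead, hnat]
        have : (-X : Polynomial ℝ).leadingCoeff = -1 := by
          rw [leadingCoeff_neg, leadingCoeff_X]
        rw [this]
        rw [show ((-1:ℝ)) ^ n = 1 from hnpow]
        ring
      have htend : Tendsto (fun x => (h.comp (-X)).eval x) atTop atTop :=
        (h.comp (-X)).tendsto_atTop_of_leadingCoeff_nonneg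
          (by rw [degree_eq_natDegree h2ne, h2nat]; exact_mod_cast hn0)
          (by rw [h2lead]; linarith)
      obtain ⟨T, hT1, hT2⟩ :=
        ((htend.eventually (eventually_gt_atTop 0)).and
          (eventually_gt_atTop (-2 : ℝ))).exists
      have hevT : h.eval (-T) = (h.comp (-X)).eval T := by
        rw [eval_comp]
        simp
      set t : ℕ → ℝ := fun k => if k = 0 then -T else 2 * (k:ℝ) with ht
      have hsgn : ∀ k, k ≤ n → 0 < (-1:ℝ) ^ k * h.eval (t k) := by
        intro k hk
        rcases Nat.eq_zero_or_pos k with rfl | hk0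
        · have htk : t 0 = -T := by simp [ht]
          rw [htk, pow_zero, one_mul, hevT]
          exact hT1
        · have htk : t k = 2 * (k:ℝ) := by
            simp only [ht]
            rw [if_neg (by omega : ¬ k = 0)]
          rw [htk]
          exact hevalh k hk0 hk
      apply alt_sign_card _ hcont n t _ (fun x hx => hx) hfin
      · intro k hk
        rcases Nat.eq_zero_or_pos k with rfl | hk0
        · have hT2' : (-2:ℝ) < T := hT2
          simp only [ht]
          norm_num
          linarith
        · simp only [ht]
          rw [if_neg (by omega : ¬ k = 0), if_neg (by omega : ¬ k + 1 = 0)]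
          push_cast
          linarith
      · intro k hk
        exact hmulneg _ _ k (hsgn k (by omega)) (hsgn (k + 1) (by omega))
  omega
end
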